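/- Let G be a generic two-by-two game, and let u, v be unit quaternions with u² = v² = −1 and u·v + v·u = 0. Let μ be the mixed quantum strategy assigning probability 1/3 to each of the three points 1, u, v. Then there is no mixed quantum strategy ν such that (ν,μ) is a mixed-strategy Nash equilibrium of G^Q. -/

import Mathlib

noncomputable section

open MeasureTheory

local notation "ℍ" => Quaternion ℝ

instance : MeasurableSpace (Quaternion ℝ) := borel _
instance : BorelSpace (Quaternion ℝ) := ⟨rfl⟩

/-- The four real coordinates of a quaternion: `p = π₁(p) + π₂(p)i + π₃(p)j + π₄(p)k`. -/
def piQ (t : Fin 4) (p : ℍ) : ℝ := ![p.re, p.imI, p.imJ, p.imK] t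

/-- The standard inner product on ℍ ≅ ℝ⁴. -/
def qinner (p q : ℍ) : ℝ := ∑ t : Fin 4, piQ t p * piQ t q

/-- The quaternions `i`, `j`, `k`. -/
def qI : ℍ := ⟨0, 1, 0, 0⟩
def qJ : ℍ := ⟨0, 0, 1, 0⟩
def qK : ℍ := ⟨0, 0, 0, 1⟩

/-- A mixed quantum strategy: a Borel probability measure on the unit quaternions. -/
def IsMixed (μ : Measure ℍ) : Prop :=
  IsProbabilityMeasure μ ∧ μ {p : ℍ | ‖p‖ = 1} = 1

/-- Quantum payoff with payoff vector `X`: `P^Q(p,q) = Σ_t π_t(pq)² X_t`. -/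
def payoff (X : Fin 4 → ℝ) (p q : ℍ) : ℝ :=
  ∑ t : Fin 4, (piQ t (p * q)) ^ 2 * X t

/-- Expected payoff of a pair of mixed strategies. -/
def payoffM (X : Fin 4 → ℝ) (ν μ : Measure ℍ) : ℝ :=
  ∫ p, ∫ q, payoff X p q ∂μ ∂ν

/-- Mixed-strategy Nash equilibrium of the quantum game with payoff vectors `X`, `Y`. -/
def IsNash (X Y : Fin 4 → ℝ) (ν μ : Measure ℍ) : Prop :=
  IsMixed ν ∧ IsMixed μ ∧
    (∀ ν' : Measure ℍ, IsMixed ν' → payoffM X ν' μ ≤ payoffM X ν μ) ∧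
    (∀ μ' : Measure ℍ, IsMixed μ' → payoffM Y ν μ' ≤ payoffM Y ν μ)

/-- Equivalence of mixed quantum strategies. -/
def StratEquiv (μ μ' : Measure ℍ) : Prop :=
  ∀ p : ℍ, ‖p‖ = 1 → ∀ t : Fin 4,
    ∫ q, (piQ t (p * q)) ^ 2 ∂μ = ∫ q, (piQ t (p * q)) ^ 2 ∂μ'

/-- Equivalence of pairs of mixed strategies: `(ν,μ) ∼ (ν',μ')` iff there is a unit
quaternion `u` with `ν' ∼ ν·u` and `μ' ∼ u⁻¹·μ`. -/
def PairEquiv (ν μ ν' μ' : Measure ℍ) : Prop :=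
  ∃ u : ℍ, ‖u‖ = 1 ∧
    StratEquiv (Measure.map (fun p => p * u) ν) ν' ∧
    StratEquiv (Measure.map (fun q => u⁻¹ * q) μ) μ'

/-- A generic two-by-two game: all payoffs distinct and all pairwise sums distinct. -/
def Generic (X Y : Fin 4 → ℝ) : Prop :=
  Function.Injective X ∧ Function.Injective Y ∧
    (∀ s t s' t' : Fin 4, s < t → s' < t' → X s + X t = X s' + X t' → s = s' ∧ t = t') ∧
    (∀ s t s' t' : Fin 4, s < t → s' < t' → Y s + Y t = Y s' + Y t' → s = s' ∧ t = t')

/-- `K(p) = π₁(p)π₂(p)π₃(p)π₄(p)`. -/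
def K (p : ℍ) : ℝ := p.re * p.imI * p.imJ * p.imK

/-- Intertwined quadruple of quaternions. -/
def Intertwined (p q r s : ℍ) : Prop :=
  ∃ α : ℝ, α ≠ 0 ∧ ∀ X Y : ℝ, α * K (X • p + Y • q) = K (X • r + Y • s)

/-- Fully intertwined quadruple of quaternions. -/
def FullyIntertwined (p q r s : ℍ) : Prop :=
  Intertwined p q r s ∧ Intertwined p r q s

/-- `p` is an optimal response for Player One to the mixed strategy `μ`. -/
def Optimal₁ (X : Fin 4 → ℝ) (μ : Measure ℍ) (p : ℍ) : Prop :=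
  ‖p‖ = 1 ∧ ∀ p' : ℍ, ‖p'‖ = 1 → ∫ q, payoff X p' q ∂μ ≤ ∫ q, payoff X p q ∂μ

/-- `q` is an optimal response for Player Two to the mixed strategy `ν`. -/
def Optimal₂ (Y : Fin 4 → ℝ) (ν : Measure ℍ) (q : ℍ) : Prop :=
  ‖q‖ = 1 ∧ ∀ q' : ℍ, ‖q'‖ = 1 → ∫ p, payoff Y p q' ∂ν ≤ ∫ p, payoff Y p q ∂ν

/-!
Since `u` and `v` are anticommuting pure unit quaternions, `1, u, v, uv` is an orthonormal basis
of `ℍ`, and Parseval's identity gives `P₁(p,1) + P₁(p,u) + P₁(p,v) + P₁(p,uv) = X₁ + X₂ + X₃ + X₄`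
for every unit `p`. So against `μ` Player One's optimal replies are exactly the `p` minimising
`P₁(p,uv)`, i.e. `p·uv = ±e_{t₀}` for the unique smallest payoff `X_{t₀}`, and `ν` is carried by
`±p₀` with `p₀ = e_{t₀}(uv)⁻¹`. Against `±p₀` Player Two has a pure reply earning the unique
largest payoff `Y_{s₀}`, and `μ` earns it only if `p₀` and `p₀u` both lie on `ℝ e_{s₀}`. Then `u`
is real, contradicting `u² = -1`.
-/

open scoped InnerProductSpace

/-- `1, i, j, k`, with `1` written as a literal: `simp` reduces the coordinates of the literal but
not those of `(1 : ℍ)`. -/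
def eQ : Fin 4 → ℍ := ![⟨1, 0, 0, 0⟩, qI, qJ, qK]

lemma piQ_eq_inner (t : Fin 4) (p : ℍ) : piQ t p = ⟪p, eQ t⟫_ℝ := by
  rw [real_inner_comm, Quaternion.inner_def, Quaternion.re_mul]
  fin_cases t <;> simp [piQ, eQ, qI, qJ, qK]

@[fun_prop]
lemma continuous_piQ (t : Fin 4) : Continuous (piQ t) := by
  simp_rw [funext (piQ_eq_inner t)]
  fun_prop

lemma piQ_eQ (s t : Fin 4) : piQ s (eQ t) = if s = t then 1 else 0 := by
  fin_cases s <;> fin_cases t <;> simp [piQ, eQ, qI, qJ, qK]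

lemma piQ_smul (r : ℝ) (x : ℍ) (t : Fin 4) : piQ t (r • x) = r * piQ t x := by
  fin_cases t <;> simp [piQ]

lemma sum_piQ_sq (x : ℍ) : ∑ t, piQ t x ^ 2 = ‖x‖ ^ 2 := by
  rw [sq ‖x‖, ← Quaternion.normSq_eq_norm_mul_self, Quaternion.normSq_def']
  simp [piQ, Fin.sum_univ_four]

lemma norm_eQ (t : Fin 4) : ‖eQ t‖ = 1 := by
  rw [← pow_left_inj₀ (norm_nonneg _) zero_le_one two_ne_zero, ← sum_piQ_sq]
  simp [piQ_eQ]

lemma norm_eQ_mul_inv {w : ℍ} (hw : ‖w‖ = 1) (t : Fin 4) : ‖eQ t * w⁻¹‖ = 1 := by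
  rw [norm_mul, norm_inv, hw, norm_eQ, inv_one, one_mul]

lemma eq_smul_eQ_of_piQ_eq_zero {x : ℍ} {t₀ : Fin 4} (h : ∀ t ≠ t₀, piQ t x = 0) :
    x = piQ t₀ x • eQ t₀ := by
  have hx : ∀ t, piQ t x = piQ t (piQ t₀ x • eQ t₀) := by
    intro t
    rw [piQ_smul, piQ_eQ]
    split_ifs with ht
    · rw [ht, mul_one]
    · rw [h t ht, mul_zero]
  ext
  exacts [hx 0, hx 1, hx 2, hx 3]

lemma Quaternion.re_mul_comm (a b : ℍ) : (a * b).re = (b * a).re := by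
  simp only [Quaternion.re_mul]
  ring

lemma Quaternion.re_mul_eq_zero_of_mul_add_mul_eq_zero {u v : ℍ} (h : u * v + v * u = 0) :
    (u * v).re = 0 := by
  have h' := congrArg QuaternionAlgebra.re h
  rw [Quaternion.re_add, Quaternion.re_mul_comm v u, Quaternion.re_zero] at h'
  linarith

lemma Quaternion.re_eq_zero_of_sq_eq_neg_one {u : ℍ} (hu : ‖u‖ = 1) (hu2 : u ^ 2 = -1) :
    u.re = 0 :=
  Quaternion.sq_eq_neg_normSq.1 <| by
    rw [hu2, Quaternion.normSq_eq_norm_mul_self, hu, mul_one, Quaternion.coe_one]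

lemma Quaternion.inner_mul_left (p x y : ℍ) : ⟪p * x, y⟫_ℝ = ⟪x, star p * y⟫_ℝ := by
  simp only [Quaternion.inner_def, Quaternion.re_mul, Quaternion.imI_mul, Quaternion.imJ_mul,
    Quaternion.imK_mul, star_mul, star_star, Quaternion.re_star, Quaternion.imI_star,
    Quaternion.imJ_star, Quaternion.imK_star]
  ring

lemma orthonormal_one_u_v_mul {u v : ℍ} (hu : ‖u‖ = 1) (hv : ‖v‖ = 1) (hu0 : u.re = 0)
    (hv0 : v.re = 0) (huv : (u * v).re = 0) : Orthonormal ℝ ![1, u, v, u * v] := by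
  rw [Quaternion.re_mul, hu0, hv0] at huv
  refine ⟨fun i => ?_, fun i j hij => ?_⟩
  · fin_cases i <;> simp [hu, hv]
  · fin_cases i <;> fin_cases j <;> simp at hij <;>
      simp [Quaternion.inner_def, hu0, hv0] <;> linarith

/-- `piQ t (p * b i) = ⟪b i, star p * eQ t⟫`, so this is Parseval's identity for
`star p * eQ t`. -/
lemma sum_piQ_mul_sq {b : Fin 4 → ℍ} (hb : Orthonormal ℝ b) (p : ℍ) (t : Fin 4) :
    ∑ i, piQ t (p * b i) ^ 2 = ‖p‖ ^ 2 := by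
  let B := (basisOfOrthonormalOfCardEqFinrank hb
    (by rw [Quaternion.finrank_eq_four, Fintype.card_fin])).toOrthonormalBasis (by simpa)
  have hB : ∀ i, B i = b i := by simp [B]
  simp only [piQ_eq_inner, Quaternion.inner_mul_left, ← hB, B.sum_sq_inner_right, norm_mul,
    norm_star, norm_eQ, mul_one]

lemma sum_payoff_mul {b : Fin 4 → ℍ} (hb : Orthonormal ℝ b) (X : Fin 4 → ℝ) (p : ℍ) :
    ∑ i, payoff X p (b i) = ‖p‖ ^ 2 * ∑ t, X t := by
  simp only [payoff]
  rw [Finset.sum_comm, Finset.mul_sum]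
  simp only [← Finset.sum_mul, sum_piQ_mul_sq hb]

lemma Function.Injective.exists_forall_ne_lt {ι β : Type*} [Finite ι] [Nonempty ι]
    [LinearOrder β] {f : ι → β} (hf : Function.Injective f) : ∃ i, ∀ j ≠ i, f i < f j := by
  obtain ⟨i, hi⟩ := Finite.exists_min f
  exact ⟨i, fun j hj => (hi j).lt_of_ne (hf.ne hj.symm)⟩

lemma Function.Injective.exists_forall_ne_gt {ι β : Type*} [Finite ι] [Nonempty ι]
    [LinearOrder β] {f : ι → β} (hf : Function.Injective f) : ∃ i, ∀ j ≠ i, f j < f i := by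
  obtain ⟨i, hi⟩ := Finite.exists_max f
  exact ⟨i, fun j hj => (hi j).lt_of_ne (hf.ne hj)⟩

lemma eq_zero_of_sum_mul_le_of_forall_ne_lt {ι : Type*} [Fintype ι] {a Z : ι → ℝ} {i : ι}
    (ha : ∀ j, 0 ≤ a j) (hsum : ∑ j, a j = 1) (hZ : ∀ j ≠ i, Z i < Z j)
    (hle : ∑ j, a j * Z j ≤ Z i) : ∀ j ≠ i, a j = 0 := by
  have hnonneg : ∀ j ∈ Finset.univ, 0 ≤ a j * (Z j - Z i) := fun j _ => by
    rcases eq_or_ne j i with rfl | hj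
    · simp
    · exact mul_nonneg (ha j) (sub_pos.2 (hZ j hj)).le
  have hzero : ∑ j, a j * (Z j - Z i) = 0 := by
    refine le_antisymm ?_ (Finset.sum_nonneg hnonneg)
    simp only [mul_sub, Finset.sum_sub_distrib, ← Finset.sum_mul, hsum, one_mul]
    linarith
  intro j hj
  have := (Finset.sum_eq_zero_iff_of_nonneg hnonneg).1 hzero j (Finset.mem_univ j)
  exact (mul_eq_zero.1 this).resolve_right (sub_pos.2 (hZ j hj)).ne'

lemma payoff_neg (X : Fin 4 → ℝ) (p q : ℍ) : payoff (-X) p q = -payoff X p q := by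
  simp [payoff]

lemma payoff_smul_left (X : Fin 4 → ℝ) (r : ℝ) (p q : ℍ) :
    payoff X (r • p) q = r ^ 2 * payoff X p q := by
  simp only [payoff, smul_mul_assoc, piQ_smul, Finset.mul_sum]
  ring_nf

lemma payoff_of_mul_eq_eQ (X : Fin 4 → ℝ) {p q : ℍ} {t₀ : Fin 4} (h : p * q = eQ t₀) :
    payoff X p q = X t₀ := by
  simp [payoff, h, piQ_eQ]

lemma payoff_le_of_forall_le (X : Fin 4 → ℝ) {p q : ℍ} (hpq : ‖p * q‖ = 1) {c : ℝ}
    (hX : ∀ t, X t ≤ c) : payoff X p q ≤ c :=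
  calc payoff X p q ≤ ∑ t, piQ t (p * q) ^ 2 * c :=
        Finset.sum_le_sum fun t _ => mul_le_mul_of_nonneg_left (hX t) (sq_nonneg _)
    _ = c := by rw [← Finset.sum_mul, sum_piQ_sq, hpq, one_pow, one_mul]

lemma le_payoff_of_forall_le (X : Fin 4 → ℝ) {p q : ℍ} (hpq : ‖p * q‖ = 1) {c : ℝ}
    (hX : ∀ t, c ≤ X t) : c ≤ payoff X p q := by
  simpa [payoff_neg] using payoff_le_of_forall_le (-X) hpq (c := -c) (by simpa using hX)

lemma abs_payoff_le (X : Fin 4 → ℝ) {p q : ℍ} (hpq : ‖p * q‖ = 1) : |payoff X p q| ≤ ‖X‖ :=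
  abs_le.2 ⟨le_payoff_of_forall_le X hpq fun t => (abs_le.1 (norm_le_pi_norm X t)).1,
    payoff_le_of_forall_le X hpq fun t => (abs_le.1 (norm_le_pi_norm X t)).2⟩

lemma mul_eq_smul_eQ_of_payoff_le (X : Fin 4 → ℝ) {p q : ℍ} (hpq : ‖p * q‖ = 1) {t₀ : Fin 4}
    (hX : ∀ t ≠ t₀, X t₀ < X t) (h : payoff X p q ≤ X t₀) :
    p * q = piQ t₀ (p * q) • eQ t₀ := by
  refine eq_smul_eQ_of_piQ_eq_zero fun t ht => pow_eq_zero_iff two_ne_zero |>.1 ?_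
  refine eq_zero_of_sum_mul_le_of_forall_ne_lt (fun t => sq_nonneg _) ?_ hX h t ht
  rw [sum_piQ_sq, hpq, one_pow]

lemma mul_eq_smul_eQ_of_le_payoff (X : Fin 4 → ℝ) {p q : ℍ} (hpq : ‖p * q‖ = 1) {t₀ : Fin 4}
    (hX : ∀ t ≠ t₀, X t < X t₀) (h : X t₀ ≤ payoff X p q) :
    p * q = piQ t₀ (p * q) • eQ t₀ :=
  mul_eq_smul_eQ_of_payoff_le (-X) hpq (fun t ht => neg_lt_neg (hX t ht))
    (by simpa [payoff_neg] using h)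

lemma ae_eq_of_ae_le_of_le_integral {α : Type*} [MeasurableSpace α] {ν : Measure α}
    [IsProbabilityMeasure ν] {g : α → ℝ} {c : ℝ} (hg : Integrable g ν)
    (hle : ∀ᵐ x ∂ν, g x ≤ c) (hc : c ≤ ∫ x, g x ∂ν) : ∀ᵐ x ∂ν, g x = c := by
  have hint : ∫ x, g x ∂ν = ∫ _, c ∂ν := by
    rw [integral_const, probReal_univ, one_smul]
    exact le_antisymm (by simpa using integral_mono_ae hg (integrable_const c) hle) hc
  exact (integral_eq_iff_of_ae_le hg (integrable_const c) hle).1 hint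

def diracThirds {α : Type*} [MeasurableSpace α] (a b c : α) : Measure α :=
  (3 : ENNReal)⁻¹ • Measure.dirac a + (3 : ENNReal)⁻¹ • Measure.dirac b +
    (3 : ENNReal)⁻¹ • Measure.dirac c

lemma integral_diracThirds {α : Type*} [MeasurableSpace α] [MeasurableSingletonClass α]
    (f : α → ℝ) (a b c : α) : ∫ x, f x ∂diracThirds a b c = (f a + f b + f c) / 3 := by
  have hf : ∀ x, Integrable f ((3 : ENNReal)⁻¹ • Measure.dirac x) := fun x =>
    (integrable_dirac (by simp)).smul_measure (by simp)
  rw [diracThirds, integral_add_measure ((hf a).add_measure (hf b)) (hf c),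
    integral_add_measure (hf a) (hf b)]
  simp only [integral_smul_measure, integral_dirac, ENNReal.toReal_inv, smul_eq_mul]
  norm_num
  ring

lemma isMixed_dirac {p : ℍ} (hp : ‖p‖ = 1) : IsMixed (Measure.dirac p) :=
  ⟨inferInstance, Measure.dirac_apply_of_mem hp⟩

lemma IsMixed.ae_norm_eq_one {ν : Measure ℍ} (hν : IsMixed ν) : ∀ᵐ p ∂ν, ‖p‖ = 1 := by
  have := hν.1
  rw [ae_iff_measure_eq (measurableSet_eq_fun continuous_norm.measurable
    measurable_const).nullMeasurableSet, hν.2, measure_univ]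

lemma IsMixed.integrable_integral_payoff {ν μ : Measure ℍ} (hν : IsMixed ν) (hμ : IsMixed μ)
    (X : Fin 4 → ℝ) : Integrable (fun p => ∫ q, payoff X p q ∂μ) ν := by
  have := hν.1
  have := hμ.1
  have hcont : Continuous fun pq : ℍ × ℍ => payoff X pq.1 pq.2 := by
    unfold payoff
    fun_prop
  refine Integrable.of_bound (C := ‖X‖)
    (hcont.stronglyMeasurable.integral_prod_right (f := payoff X)).aestronglyMeasurable ?_
  filter_upwards [hν.ae_norm_eq_one] with p hp
  have hbound : ∀ᵐ q ∂μ, ‖payoff X p q‖ ≤ ‖X‖ := hμ.ae_norm_eq_one.mono fun q hq => by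
    rw [Real.norm_eq_abs]
    exact abs_payoff_le X (by rw [norm_mul, hp, hq, one_mul])
  simpa using norm_integral_le_of_norm_le_const hbound

lemma IsNash.ae_optimal₁ {X Y : Fin 4 → ℝ} {ν μ : Measure ℍ} {p₀ : ℍ} (h : IsNash X Y ν μ)
    (hp₀ : Optimal₁ X μ p₀) : ∀ᵐ p ∂ν, Optimal₁ X μ p := by
  obtain ⟨hν, hμ, hbest, -⟩ := h
  have := hν.1
  have hge : ∫ q, payoff X p₀ q ∂μ ≤ ∫ p, ∫ q, payoff X p q ∂μ ∂ν := by
    simpa [payoffM, integral_dirac] using hbest _ (isMixed_dirac hp₀.1)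
  have heq := ae_eq_of_ae_le_of_le_integral (hν.integrable_integral_payoff hμ X)
    (hν.ae_norm_eq_one.mono fun p hp => hp₀.2 p hp) hge
  filter_upwards [hν.ae_norm_eq_one, heq] with p hp hgp
  exact ⟨hp, fun p' hp' => hgp ▸ hp₀.2 p' hp'⟩

lemma payoffM_eq_of_ae_payoff_eq {Y : Fin 4 → ℝ} {ν : Measure ℍ} [IsProbabilityMeasure ν]
    {p₀ : ℍ} (h : ∀ᵐ p ∂ν, ∀ q, payoff Y p q = payoff Y p₀ q) (μ : Measure ℍ) :
    payoffM Y ν μ = ∫ q, payoff Y p₀ q ∂μ := by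
  have hconst : (fun p => ∫ q, payoff Y p q ∂μ) =ᵐ[ν] fun _ => ∫ q, payoff Y p₀ q ∂μ :=
    h.mono fun p hp => by simp only [hp]
  rw [payoffM, integral_congr_ae hconst, integral_const, probReal_univ, one_smul]

lemma integral_payoff_diracThirds {u v : ℍ} (hb : Orthonormal ℝ ![1, u, v, u * v])
    (X : Fin 4 → ℝ) (p : ℍ) :
    ∫ q, payoff X p q ∂diracThirds 1 u v = (‖p‖ ^ 2 * ∑ t, X t - payoff X p (u * v)) / 3 := by
  rw [integral_diracThirds, ← sum_payoff_mul hb X p, Fin.sum_univ_four]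
  simp

lemma optimal₁_diracThirds {u v : ℍ} (hb : Orthonormal ℝ ![1, u, v, u * v])
    (X : Fin 4 → ℝ) {t₀ : Fin 4} (hX : ∀ t, X t₀ ≤ X t) :
    Optimal₁ X (diracThirds 1 u v) (eQ t₀ * (u * v)⁻¹) := by
  have hw : ‖u * v‖ = 1 := by simpa using hb.1 3
  have hw₀ : u * v ≠ 0 := norm_ne_zero_iff.1 (by rw [hw]; exact one_ne_zero)
  refine ⟨norm_eQ_mul_inv hw t₀, fun p hp => ?_⟩
  have hmin := le_payoff_of_forall_le X (p := p) (q := u * v)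
    (by rw [norm_mul, hp, hw, one_mul]) hX
  rw [integral_payoff_diracThirds hb, integral_payoff_diracThirds hb, hp, norm_eQ_mul_inv hw,
    payoff_of_mul_eq_eQ X (inv_mul_cancel_right₀ hw₀ (eQ t₀))]
  linarith

lemma ae_payoff_eq_of_isNash_diracThirds {X Y : Fin 4 → ℝ} {ν : Measure ℍ} {u v : ℍ}
    (hb : Orthonormal ℝ ![1, u, v, u * v]) {t₀ : Fin 4} (hX : ∀ t ≠ t₀, X t₀ < X t)
    (h : IsNash X Y ν (diracThirds 1 u v)) :
    ∀ᵐ p ∂ν, ∀ q, payoff Y p q = payoff Y (eQ t₀ * (u * v)⁻¹) q := by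
  set w := u * v
  set p₀ := eQ t₀ * w⁻¹
  have hw : ‖w‖ = 1 := by simpa using hb.1 3
  have hw₀ : w ≠ 0 := norm_ne_zero_iff.1 (by rw [hw]; exact one_ne_zero)
  have hp₀w : p₀ * w = eQ t₀ := inv_mul_cancel_right₀ hw₀ (eQ t₀)
  have hopt : Optimal₁ X (diracThirds 1 u v) p₀ := optimal₁_diracThirds hb X fun t =>
    (eq_or_ne t t₀).elim (fun ht => ht ▸ le_rfl) fun ht => (hX t ht).le
  filter_upwards [h.ae_optimal₁ hopt] with p hp
  have hle : payoff X p w ≤ X t₀ := by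
    have := hp.2 p₀ hopt.1
    rw [integral_payoff_diracThirds hb, integral_payoff_diracThirds hb, hp.1, hopt.1,
      payoff_of_mul_eq_eQ X hp₀w] at this
    linarith
  set c := piQ t₀ (p * w)
  have hpc : p = c • p₀ := mul_right_cancel₀ hw₀ <| by
    rw [mul_eq_smul_eQ_of_payoff_le X (by rw [norm_mul, hp.1, hw, one_mul]) hX hle,
      smul_mul_assoc, hp₀w]
  have hc : c ^ 2 = 1 := by
    have := congrArg norm hpc
    rw [hp.1, norm_smul, hopt.1, mul_one, Real.norm_eq_abs] at this
    rw [← sq_abs, ← this, one_pow]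
  intro q
  rw [hpc, payoff_smul_left, hc, one_mul]

lemma exists_eq_coe_of_isNash_diracThirds {X Y : Fin 4 → ℝ} {ν : Measure ℍ} {u v p₀ : ℍ}
    (hu : ‖u‖ = 1) (hv : ‖v‖ = 1) (hp₀ : ‖p₀‖ = 1) {s₀ : Fin 4} (hY : ∀ s ≠ s₀, Y s < Y s₀)
    (hν : ∀ᵐ p ∂ν, ∀ q, payoff Y p q = payoff Y p₀ q) (h : IsNash X Y ν (diracThirds 1 u v)) :
    ∃ r : ℝ, u = r := by
  have : IsProbabilityMeasure ν := h.1.1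
  have hp₀₀ : p₀ ≠ 0 := norm_ne_zero_iff.1 (by rw [hp₀]; exact one_ne_zero)
  have hunit : ∀ {q : ℍ}, ‖q‖ = 1 → ‖p₀ * q‖ = 1 := fun hq => by rw [norm_mul, hp₀, hq, one_mul]
  have hmax : ∀ {q : ℍ}, ‖q‖ = 1 → payoff Y p₀ q ≤ Y s₀ := fun hq =>
    payoff_le_of_forall_le Y (hunit hq) fun s =>
      (eq_or_ne s s₀).elim (fun hs => hs ▸ le_rfl) fun hs => (hY s hs).le
  have hq' : ‖p₀⁻¹ * eQ s₀‖ = 1 := by rw [norm_mul, norm_inv, hp₀, norm_eQ, inv_one, one_mul]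
  -- the pure reply `p₀⁻¹ * eQ s₀` earns `Y s₀`, so `μ` must earn it at each of `1, u, v`
  have hbest := h.2.2.2 _ (isMixed_dirac hq')
  rw [payoffM_eq_of_ae_payoff_eq hν, payoffM_eq_of_ae_payoff_eq hν, integral_dirac,
    integral_diracThirds, payoff_of_mul_eq_eQ Y (mul_inv_cancel_left₀ hp₀₀ (eQ s₀))] at hbest
  have h1 := mul_eq_smul_eQ_of_le_payoff Y (hunit norm_one) hY
    (by linarith [hmax norm_one, hmax hu, hmax hv])
  have h2 := mul_eq_smul_eQ_of_le_payoff Y (hunit hu) hY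
    (by linarith [hmax norm_one, hmax hu, hmax hv])
  rw [mul_one] at h1
  set a := piQ s₀ p₀
  set b := piQ s₀ (p₀ * u)
  have ha : a ≠ 0 := by
    intro ha
    rw [h1, ha, zero_smul] at hp₀₀
    exact hp₀₀ rfl
  refine ⟨b / a, mul_left_cancel₀ hp₀₀ ?_⟩
  calc p₀ * u = (b / a) • p₀ := by rw [h2, h1, smul_smul, div_mul_cancel₀ _ ha]
    _ = p₀ * (b / a : ℝ) := by rw [← Quaternion.coe_mul_eq_smul, Quaternion.coe_commutes]

/-- In a generic game, the strategy playing `1, u, v` each with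
probability 1/3 is not Player Two's part of any Nash equilibrium. -/
theorem no_equilibrium_one_third (X Y : Fin 4 → ℝ) (hG : Generic X Y)
    (u v : ℍ) (hu : ‖u‖ = 1) (hv : ‖v‖ = 1)
    (hu2 : u ^ 2 = -1) (hv2 : v ^ 2 = -1) (huv : u * v + v * u = 0) :
    ¬ ∃ ν : Measure ℍ,
        IsNash X Y ν
          ((3 : ENNReal)⁻¹ • Measure.dirac (1 : ℍ) + (3 : ENNReal)⁻¹ • Measure.dirac u +
            (3 : ENNReal)⁻¹ • Measure.dirac v) := by
  rintro ⟨ν, h⟩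
  change IsNash X Y ν (diracThirds 1 u v) at h
  have hu₀ := Quaternion.re_eq_zero_of_sq_eq_neg_one hu hu2
  have hb := orthonormal_one_u_v_mul hu hv hu₀
    (Quaternion.re_eq_zero_of_sq_eq_neg_one hv hv2)
    (Quaternion.re_mul_eq_zero_of_mul_add_mul_eq_zero huv)
  obtain ⟨t₀, hX⟩ := hG.1.exists_forall_ne_lt
  obtain ⟨s₀, hY⟩ := hG.2.1.exists_forall_ne_gt
  have hp₀ := norm_eQ_mul_inv (w := u * v) (by simpa using hb.1 3) t₀
  obtain ⟨r, rfl⟩ := exists_eq_coe_of_isNash_diracThirds hu hv hp₀ hY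
    (ae_payoff_eq_of_isNash_diracThirds hb hX h) h
  rw [Quaternion.re_coe] at hu₀
  rw [hu₀, Quaternion.coe_zero, norm_zero] at hu
  exact zero_ne_one hu
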